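/- Let X, X̃ ∈ ℝ^{N×T} with E = X − X̃ satisfying ‖E[:,j]‖₂ ≤ ε for all j. Let V, Ṽ ∈ ℝ^{N×R} with F = V − Ṽ satisfying σ_min(V) > σ_max(F). Suppose there exists G ∈ ℝ_+^{R×T} with V G = X, and let G̃ ∈ ℝ_+^{R×T} be any minimizer of ‖Ṽ G' − X̃‖_F over entrywise nonnegative G' ∈ ℝ_+^{R×T}. Let γ = max_{1 ≤ j ≤ T} ‖G[:,j]‖₂. Then the rows of G and G̃ satisfy max_{1 ≤ i ≤ R} ‖G[i,:] − G̃[i,:]‖₂ ≤ √T · (σ_max(F) γ + ε) / (σ_min(V) − σ_max(F)). -/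

import Mathlib

open Matrix BigOperators

noncomputable section

/-- The `T × T` shift matrix `S_τ` with ones on the `τ`-th upper diagonal. -/
def shiftMat (T τ : ℕ) : Matrix (Fin T) (Fin T) ℝ :=
  Matrix.of fun i j => if (j : ℕ) = (i : ℕ) + τ then 1 else 0

/-- Right shift with zero padding: `(S_τᵀ x)_j = x_{j-τ}`. -/
def shift {T : ℕ} (τ : ℕ) (x : Fin T → ℝ) : Fin T → ℝ :=
  (shiftMat T τ)ᵀ.mulVec x

/-- Euclidean dot product. -/
def dot {T : ℕ} (u v : Fin T → ℝ) : ℝ := ∑ i, u i * v i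

/-- Euclidean norm. -/
def enorm' {T : ℕ} (u : Fin T → ℝ) : ℝ := Real.sqrt (∑ i, u i ^ 2)

open Classical in
/-- Cosine of the angle between two vectors, with the convention that it is `0`
if either vector is zero. -/
def vcos {T : ℕ} (u v : Fin T → ℝ) : ℝ :=
  if u = 0 ∨ v = 0 then 0 else dot u v / (enorm' u * enorm' v)

/-- The `L`-shift cosine similarity `cos_L`. -/
def cosL {T : ℕ} (L : ℕ) (u v : Fin T → ℝ) : ℝ :=
  ⨆ ℓ : Fin L, max (vcos (shift (ℓ : ℕ) u) v) (vcos u (shift (ℓ : ℕ) v))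


/-- The largest singular value of a rectangular matrix, characterized as the supremum of
`‖B v‖₂` over unit vectors `v`. -/
def smax {T R : ℕ} (B : Matrix (Fin T) (Fin R) ℝ) : ℝ :=
  sSup {c : ℝ | ∃ v : Fin R → ℝ, enorm' v = 1 ∧ c = enorm' (B.mulVec v)}

/-- The smallest (`R`-th) singular value of a `T × R` matrix, characterized as the infimum
of `‖B v‖₂` over unit vectors `v`. -/
def smin {T R : ℕ} (B : Matrix (Fin T) (Fin R) ℝ) : ℝ :=
  sInf {c : ℝ | ∃ v : Fin R → ℝ, enorm' v = 1 ∧ c = enorm' (B.mulVec v)}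

/-- The Frobenius norm of a matrix. -/
def frob {m n : ℕ} (A : Matrix (Fin m) (Fin n) ℝ) : ℝ :=
  Real.sqrt (∑ i, ∑ j, A i j ^ 2)

/-!
Fix a column `j` and let `g`, `g̃` be the `j`-th columns of `G`, `G̃`. The Frobenius objective
splits over columns, so `Ṽ g̃` is the metric projection of `x̃ⱼ` onto the convex cone `Ṽ ℝ₊ᴿ`,
and the obtuse-angle criterion for projections gives `‖Ṽ (g - g̃)‖ ≤ ‖Ṽ g - x̃ⱼ‖` because `g` is
feasible. Since `Ṽ = V - F`, the left side is at least `(σ_min(V) - σ_max(F)) ‖g - g̃‖`, while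
`Ṽ g - x̃ⱼ = E[:,j] - F g` has norm at most `ε + σ_max(F) γ`. Every entry of a row of `G - G̃` is
bounded by the norm of its column, whence the factor `√T`.
-/

open WithLp (toLp)

section EuclideanNorm

variable {n : ℕ}

theorem enorm'_eq_norm_toLp (u : Fin n → ℝ) : enorm' u = ‖toLp 2 u‖ := by
  simp [enorm', EuclideanSpace.norm_eq]

theorem enorm'_nonneg (u : Fin n → ℝ) : 0 ≤ enorm' u := Real.sqrt_nonneg _

theorem enorm'_eq_zero {u : Fin n → ℝ} : enorm' u = 0 ↔ u = 0 := by
  simp [enorm'_eq_norm_toLp]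

@[simp]
theorem enorm'_zero : enorm' (0 : Fin n → ℝ) = 0 := enorm'_eq_zero.2 rfl

theorem enorm'_smul (c : ℝ) (u : Fin n → ℝ) : enorm' (c • u) = |c| * enorm' u := by
  simp only [enorm'_eq_norm_toLp, WithLp.toLp_smul, norm_smul, Real.norm_eq_abs]

theorem enorm'_sub_le (u v : Fin n → ℝ) : enorm' (u - v) ≤ enorm' u + enorm' v := by
  simpa only [enorm'_eq_norm_toLp, WithLp.toLp_sub] using norm_sub_le _ _

theorem enorm'_sub_enorm'_le (u v : Fin n → ℝ) : enorm' u - enorm' v ≤ enorm' (u - v) := by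
  simpa only [enorm'_eq_norm_toLp, WithLp.toLp_sub] using norm_sub_norm_le _ _

theorem abs_le_enorm' (u : Fin n → ℝ) (i : Fin n) : |u i| ≤ enorm' u := by
  simpa [enorm'_eq_norm_toLp] using PiLp.norm_apply_le (toLp 2 u) i

theorem enorm'_le_sqrt_card_mul {u : Fin n → ℝ} {M : ℝ} (h : ∀ i, |u i| ≤ M) :
    enorm' u ≤ √n * M := by
  rcases Nat.eq_zero_or_pos n with rfl | hn
  · simp [enorm']
  have hM : 0 ≤ M := (abs_nonneg _).trans (h ⟨0, hn⟩)
  calc enorm' u ≤ √(∑ _i : Fin n, M ^ 2) :=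
        Real.sqrt_le_sqrt (Finset.sum_le_sum fun i _ => by
          simpa using pow_le_pow_left₀ (abs_nonneg (u i)) (h i) 2)
    _ = √n * M := by simp [Real.sqrt_sq hM]

end EuclideanNorm

section SingularValues

variable {m n : ℕ}

theorem exists_unit_enorm'_mulVec_eq (B : Matrix (Fin m) (Fin n) ℝ) {v : Fin n → ℝ}
    (hv : v ≠ 0) : ∃ u, enorm' u = 1 ∧ enorm' (B *ᵥ v) = enorm' v * enorm' (B *ᵥ u) := by
  have hpos : 0 < enorm' v := (enorm'_nonneg v).lt_of_ne' (enorm'_eq_zero.not.2 hv)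
  refine ⟨(enorm' v)⁻¹ • v, ?_, ?_⟩
  · rw [enorm'_smul, abs_inv, abs_of_pos hpos, inv_mul_cancel₀ hpos.ne']
  · rw [Matrix.mulVec_smul, enorm'_smul, abs_inv, abs_of_pos hpos,
      mul_inv_cancel_left₀ hpos.ne']

theorem bddAbove_enorm'_mulVec_unit (B : Matrix (Fin m) (Fin n) ℝ) :
    BddAbove {c : ℝ | ∃ v : Fin n → ℝ, enorm' v = 1 ∧ c = enorm' (B *ᵥ v)} := by
  let L := LinearMap.toContinuousLinearMap (Matrix.toLpLin 2 2 B)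
  refine ⟨‖L‖, ?_⟩
  rintro _ ⟨v, hv, rfl⟩
  rw [enorm'_eq_norm_toLp] at hv
  simpa [L, enorm'_eq_norm_toLp, hv] using L.le_opNorm (toLp 2 v)

theorem bddBelow_enorm'_mulVec_unit (B : Matrix (Fin m) (Fin n) ℝ) :
    BddBelow {c : ℝ | ∃ v : Fin n → ℝ, enorm' v = 1 ∧ c = enorm' (B *ᵥ v)} := by
  refine ⟨0, ?_⟩
  rintro _ ⟨v, -, rfl⟩
  exact enorm'_nonneg _

theorem enorm'_mulVec_le_smax_mul (B : Matrix (Fin m) (Fin n) ℝ) (v : Fin n → ℝ) :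
    enorm' (B *ᵥ v) ≤ smax B * enorm' v := by
  rcases eq_or_ne v 0 with rfl | hv
  · simp
  obtain ⟨u, hu, hBv⟩ := exists_unit_enorm'_mulVec_eq B hv
  rw [hBv, mul_comm]
  exact mul_le_mul_of_nonneg_right (le_csSup (bddAbove_enorm'_mulVec_unit B) ⟨u, hu, rfl⟩)
    (enorm'_nonneg v)

theorem smin_mul_le_enorm'_mulVec (B : Matrix (Fin m) (Fin n) ℝ) (v : Fin n → ℝ) :
    smin B * enorm' v ≤ enorm' (B *ᵥ v) := by
  rcases eq_or_ne v 0 with rfl | hv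
  · simp
  obtain ⟨u, hu, hBv⟩ := exists_unit_enorm'_mulVec_eq B hv
  rw [hBv, mul_comm (enorm' v)]
  exact mul_le_mul_of_nonneg_right (csInf_le (bddBelow_enorm'_mulVec_unit B) ⟨u, hu, rfl⟩)
    (enorm'_nonneg v)

theorem smax_nonneg (B : Matrix (Fin m) (Fin n) ℝ) : 0 ≤ smax B :=
  Real.sSup_nonneg (by rintro _ ⟨v, -, rfl⟩; exact enorm'_nonneg _)

theorem smin_sub_smax_mul_le_enorm'_sub_mulVec (A B : Matrix (Fin m) (Fin n) ℝ)
    (v : Fin n → ℝ) : (smin A - smax B) * enorm' v ≤ enorm' ((A - B) *ᵥ v) :=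
  calc (smin A - smax B) * enorm' v = smin A * enorm' v - smax B * enorm' v := sub_mul _ _ _
    _ ≤ enorm' (A *ᵥ v) - enorm' (B *ᵥ v) :=
      sub_le_sub (smin_mul_le_enorm'_mulVec A v) (enorm'_mulVec_le_smax_mul B v)
    _ ≤ enorm' ((A - B) *ᵥ v) := by
      rw [Matrix.sub_mulVec]; exact enorm'_sub_enorm'_le _ _

end SingularValues

theorem Convex.norm_sub_le_of_isMinOn {E : Type*} [NormedAddCommGroup E] [InnerProductSpace ℝ E]
    {K : Set E} (hK : Convex ℝ K) {b p q : E} (hp : p ∈ K) (hq : q ∈ K)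
    (hmin : IsMinOn (fun w => ‖w - b‖) K p) : ‖q - p‖ ≤ ‖q - b‖ := by
  have : Nonempty K := ⟨⟨p, hp⟩⟩
  have hinf : ‖b - p‖ = ⨅ w : K, ‖b - w‖ := by
    refine le_antisymm (le_ciInf fun w => ?_)
      (ciInf_le (f := fun w : K => ‖b - w‖) ⟨0, ?_⟩ ⟨p, hp⟩)
    · rw [norm_sub_rev, norm_sub_rev b]; exact hmin w.2
    · rintro _ ⟨w, rfl⟩; exact norm_nonneg _
  have hinner := (norm_eq_iInf_iff_real_inner_le_zero hK hp).1 hinf q hq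
  have hexpand : ‖q - b‖ ^ 2 = ‖q - p‖ ^ 2 - 2 * inner ℝ (b - p) (q - p) + ‖b - p‖ ^ 2 := by
    rw [show q - b = (q - p) - (b - p) by abel, norm_sub_sq_real, real_inner_comm]
  exact (pow_le_pow_iff_left₀ (norm_nonneg _) (norm_nonneg _) two_ne_zero).1
    (by nlinarith [sq_nonneg ‖b - p‖])

theorem enorm'_mulVec_sub_le_of_minimizer {m n : ℕ} (A : Matrix (Fin m) (Fin n) ℝ)
    (b : Fin m → ℝ) {p q : Fin n → ℝ} (hp : 0 ≤ p) (hq : 0 ≤ q)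
    (hmin : ∀ w, 0 ≤ w → enorm' (A *ᵥ p - b) ≤ enorm' (A *ᵥ w - b)) :
    enorm' (A *ᵥ (q - p)) ≤ enorm' (A *ᵥ q - b) := by
  let f : (Fin n → ℝ) →ₗ[ℝ] EuclideanSpace ℝ (Fin m) :=
    (WithLp.linearEquiv 2 ℝ _).symm.toLinearMap ∘ₗ A.mulVecLin
  have hK : Convex ℝ (f '' Set.Ici 0) := (convex_Ici 0).linear_image f
  have := hK.norm_sub_le_of_isMinOn (b := toLp 2 b) ⟨p, hp, rfl⟩ ⟨q, hq, rfl⟩ (by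
    rintro _ ⟨w, hw, rfl⟩
    simpa [f, enorm'_eq_norm_toLp] using hmin w hw)
  simpa [f, enorm'_eq_norm_toLp, Matrix.mulVec_sub] using this

theorem frob_nonneg {m n : ℕ} (A : Matrix (Fin m) (Fin n) ℝ) : 0 ≤ frob A := Real.sqrt_nonneg _

theorem frob_sq_eq_sum_enorm'_sq {m n : ℕ} (A : Matrix (Fin m) (Fin n) ℝ) :
    frob A ^ 2 = ∑ j, enorm' (Aᵀ j) ^ 2 := by
  rw [frob, Real.sq_sqrt (by positivity), Finset.sum_comm]
  refine Finset.sum_congr rfl fun j _ => ?_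
  rw [enorm', Real.sq_sqrt (by positivity)]
  rfl

theorem le_of_sum_le_sum_update {ι : Type*} [Fintype ι] [DecidableEq ι] (f : ι → ℝ) (j : ι)
    (x : ℝ) (h : ∑ i, f i ≤ ∑ i, Function.update f j x i) : f j ≤ x := by
  rw [Finset.sum_update_of_mem (Finset.mem_univ j),
    Finset.sum_eq_add_sum_sdiff_singleton_of_mem (Finset.mem_univ j)] at h
  linarith

theorem enorm'_col_le_of_forall_frob_le {N R T : ℕ} (A : Matrix (Fin N) (Fin R) ℝ)
    (B : Matrix (Fin N) (Fin T) ℝ) (G : Matrix (Fin R) (Fin T) ℝ)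
    (hG : ∀ G' : Matrix (Fin R) (Fin T) ℝ, (∀ i j, 0 ≤ G' i j) →
      frob (A * G - B) ≤ frob (A * G' - B))
    (hGnonneg : ∀ i j, 0 ≤ G i j) (j : Fin T) {w : Fin R → ℝ} (hw : 0 ≤ w) :
    enorm' (A *ᵥ Gᵀ j - Bᵀ j) ≤ enorm' (A *ᵥ w - Bᵀ j) := by
  have hnonneg : ∀ i l, 0 ≤ G.updateCol j w i l := fun i l => by
    rw [Matrix.updateCol_apply]; split_ifs
    exacts [hw i, hGnonneg i l]
  have hcols : (fun l => enorm' ((A * G.updateCol j w - B)ᵀ l) ^ 2) =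
      Function.update (fun l => enorm' ((A * G - B)ᵀ l) ^ 2) j
        (enorm' (A *ᵥ w - Bᵀ j) ^ 2) := by
    ext l
    rcases eq_or_ne l j with rfl | hl
    · rw [Function.update_self, Matrix.mul_updateCol]
      congr 2
      ext i
      simp
    · rw [Function.update_of_ne hl, Matrix.mul_updateCol]
      congr 2
      ext i
      simp [hl]
  have hsq := pow_le_pow_left₀ (frob_nonneg _) (hG _ hnonneg) 2
  rw [frob_sq_eq_sum_enorm'_sq, frob_sq_eq_sum_enorm'_sq, hcols] at hsq
  exact (pow_le_pow_iff_left₀ (enorm'_nonneg _) (enorm'_nonneg _) two_ne_zero).1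
    (le_of_sum_le_sum_update _ j _ hsq)

theorem nnls_perturbation_general (N T R : ℕ)
    (X Xt : Matrix (Fin N) (Fin T) ℝ)
    (E : Matrix (Fin N) (Fin T) ℝ) (hE : E = X - Xt)
    (ε : ℝ) (hEcol : ∀ j : Fin T, enorm' (fun i => E i j) ≤ ε)
    (V Vt : Matrix (Fin N) (Fin R) ℝ)
    (F : Matrix (Fin N) (Fin R) ℝ) (hF : F = V - Vt)
    (hσ : smax F < smin V)
    (G : Matrix (Fin R) (Fin T) ℝ) (hGpos : ∀ i j, 0 ≤ G i j) (hVG : V * G = X)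
    (Gt : Matrix (Fin R) (Fin T) ℝ) (hGtpos : ∀ i j, 0 ≤ Gt i j)
    (hGt : ∀ G' : Matrix (Fin R) (Fin T) ℝ, (∀ i j, 0 ≤ G' i j) →
      frob (Vt * Gt - Xt) ≤ frob (Vt * G' - Xt))
    (γ : ℝ) (hγ : γ = sSup {c : ℝ | ∃ j : Fin T, c = enorm' (fun i => G i j)}) :
    ∀ i : Fin R, enorm' (fun j => G i j - Gt i j) ≤
      Real.sqrt T * (smax F * γ + ε) / (smin V - smax F) := by
  intro i
  have hγcol : ∀ j, enorm' (Gᵀ j) ≤ γ := by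
    have hfin : {c : ℝ | ∃ j : Fin T, c = enorm' (Gᵀ j)}.Finite :=
      (Set.finite_range fun j => enorm' (Gᵀ j)).subset fun _ ⟨j, hj⟩ => ⟨j, hj.symm⟩
    exact fun j => hγ ▸ le_csSup hfin.bddAbove ⟨j, rfl⟩
  have hVt : Vt = V - F := by rw [hF, sub_sub_cancel]
  have hresidual : ∀ j, Vt *ᵥ Gᵀ j - Xtᵀ j = Eᵀ j - F *ᵥ Gᵀ j := fun j => by
    have hXcol : Xᵀ j = V *ᵥ Gᵀ j := by rw [← hVG]; rfl
    have hEcolj : Eᵀ j = Xᵀ j - Xtᵀ j := by rw [hE]; rfl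
    rw [hEcolj, hXcol, hVt, Matrix.sub_mulVec]
    abel
  have hcol : ∀ j, enorm' (Gᵀ j - Gtᵀ j) ≤ (smax F * γ + ε) / (smin V - smax F) := by
    intro j
    rw [le_div_iff₀ (sub_pos.2 hσ), mul_comm]
    calc (smin V - smax F) * enorm' (Gᵀ j - Gtᵀ j) ≤ enorm' (Vt *ᵥ (Gᵀ j - Gtᵀ j)) :=
          hVt ▸ smin_sub_smax_mul_le_enorm'_sub_mulVec V F _
      _ ≤ enorm' (Vt *ᵥ Gᵀ j - Xtᵀ j) :=
          enorm'_mulVec_sub_le_of_minimizer Vt (Xtᵀ j) (fun k => hGtpos k j) (fun k => hGpos k j)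
            fun w hw => enorm'_col_le_of_forall_frob_le Vt Xt Gt hGt hGtpos j hw
      _ ≤ enorm' (Eᵀ j) + enorm' (F *ᵥ Gᵀ j) := hresidual j ▸ enorm'_sub_le _ _
      _ ≤ ε + smax F * γ := add_le_add (hEcol j)
          ((enorm'_mulVec_le_smax_mul F _).trans
            (mul_le_mul_of_nonneg_left (hγcol j) (smax_nonneg F)))
      _ = smax F * γ + ε := add_comm _ _
  rw [mul_div_assoc]
  exact enorm'_le_sqrt_card_mul fun j => (abs_le_enorm' _ i).trans (hcol j)

/-- NNLS perturbation corollary: if `V G = X` with `G ≥ 0`, `G̃` minimizes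
`‖Ṽ G' − X̃‖_F` over nonnegative `G'`, the columns of `E = X − X̃` have 2-norm at most `ε`,
and `σ_min(V) > σ_max(F)` for `F = V − Ṽ`, then every row of `G − G̃` has 2-norm at most
`√T (σ_max(F) γ + ε)/(σ_min(V) − σ_max(F))`, with `γ` the largest column 2-norm of `G`. -/
theorem nnls_perturbation (N T R : ℕ) (hT : 0 < T)
    (X Xt : Matrix (Fin N) (Fin T) ℝ)
    (E : Matrix (Fin N) (Fin T) ℝ) (hE : E = X - Xt)
    (ε : ℝ) (hEcol : ∀ j : Fin T, enorm' (fun i => E i j) ≤ ε)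
    (V Vt : Matrix (Fin N) (Fin R) ℝ)
    (F : Matrix (Fin N) (Fin R) ℝ) (hF : F = V - Vt)
    (hσ : smax F < smin V)
    (G : Matrix (Fin R) (Fin T) ℝ) (hGpos : ∀ i j, 0 ≤ G i j) (hVG : V * G = X)
    (Gt : Matrix (Fin R) (Fin T) ℝ) (hGtpos : ∀ i j, 0 ≤ Gt i j)
    (hGt : ∀ G' : Matrix (Fin R) (Fin T) ℝ, (∀ i j, 0 ≤ G' i j) →
      frob (Vt * Gt - Xt) ≤ frob (Vt * G' - Xt))
    (γ : ℝ) (hγ : γ = sSup {c : ℝ | ∃ j : Fin T, c = enorm' (fun i => G i j)}) :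
    ∀ i : Fin R, enorm' (fun j => G i j - Gt i j) ≤
      Real.sqrt T * (smax F * γ + ε) / (smin V - smax F) :=
  nnls_perturbation_general N T R X Xt E hE ε hEcol V Vt F hF hσ G hGpos hVG Gt hGtpos hGt γ hγ

end
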